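/- Let n ≥ 2 be an even integer. There exist a finite edge-index type E, endpoint maps s, t : E → Fin(n/2), a voltage assignment α : E → Z_n, and a map ω assigning to each vertex x ∈ Fin(n/2) an additive subgroup ω(x) of Z_n, such that the covering graph X^{(α,ω)} — defined as the simple graph whose vertex set is the set of pairs (x, K) with x ∈ Fin(n/2) and K a coset of ω(x) in Z_n, and with (x, K) adjacent to (y, H) if and only if there is an edge e ∈ E with endpoints {s(e), t(e)} = {x, y} (oriented from x to y) and (K + α(e)) ∩ H ≠ ∅ — is isomorphic to the 2-token graph F_2(K_n). In particular, F_2(K_n) for n even is a covering graph over a combined base graph on n/2 vertices with voltages in Z_n. -/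

import Mathlib

open SimpleGraph Finset

variable {V : Type*}

/-- The `k`-token graph of a simple graph `X`: vertices are the `k`-element subsets
of the vertex set, two subsets being adjacent when their symmetric difference is an
edge of `X`. -/
def tokenGraph [DecidableEq V] (X : SimpleGraph V) (k : ℕ) :
    SimpleGraph {A : Finset V // A.card = k} where
  Adj A B := ∃ a b : V, X.Adj a b ∧ (symmDiff A.val B.val) = {a, b}
  symm := by
    constructor; rintro A B ⟨a, b, hab, h⟩
    exact ⟨b, a, hab.symm, by rw [symmDiff_comm]; rw [h]; exact Finset.pair_comm a b⟩
  loopless := by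
    constructor; rintro A ⟨a, b, hab, h⟩
    simp only [symmDiff_self, Finset.bot_eq_empty] at h
    exact (Finset.insert_ne_empty a {b}) h.symm

/-- A simple graph is edge-transitive if its automorphism group acts transitively
on its edges. -/
def EdgeTransitive {W : Type*} (Y : SimpleGraph W) : Prop :=
  ∀ e ∈ Y.edgeSet, ∀ f ∈ Y.edgeSet, ∃ φ : Y ≃g Y, e.map φ = f

/-- A simple graph is vertex-transitive if its automorphism group acts transitively
on its vertices. -/
def VertexTransitive {W : Type*} (Y : SimpleGraph W) : Prop :=
  ∀ u v : W, ∃ φ : Y ≃g Y, φ u = v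

/-- The star graph `K_{1,n}` on vertex set `{0, 1, …, n}`, where the center `0`
is joined to each of the `n` leaves. -/
def starGraph (n : ℕ) : SimpleGraph (Fin (n + 1)) where
  Adj i j := i ≠ j ∧ (i = 0 ∨ j = 0)
  symm := by constructor; rintro i j ⟨hne, h⟩; exact ⟨hne.symm, h.symm⟩
  loopless := by constructor; rintro i ⟨hne, _⟩; exact hne rfl

/-- The covering graph of a combined base graph: the base (multi)graph has vertex set
`Fin m`, edge set `E` with endpoint maps `s t : E → Fin m`, a voltage `α e ∈ ZMod n`
on each edge, and a subgroup `ω x ≤ ZMod n` at each vertex.  The vertices of the cover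
are the pairs `(x, K)` with `K` a coset of `ω x`, and `(x, K)` is adjacent to `(y, H)`
iff some base edge `e` joins `x` to `y` (traversed from its source to its target) with
`(K + α e) ∩ H ≠ ∅`. -/
def coveringGraph {m n : ℕ} (E : Type) (s t : E → Fin m) (α : E → ZMod n)
    (ω : Fin m → AddSubgroup (ZMod n)) :
    SimpleGraph (Σ x : Fin m, {K : Set (ZMod n) // ∃ g : ZMod n,
      K = (fun z => g + z) '' (ω x : Set (ZMod n))}) where
  Adj v w := v ≠ w ∧ ∃ e : E,
    (s e = v.1 ∧ t e = w.1 ∧ (((fun z => z + α e) '' v.2.val) ∩ w.2.val).Nonempty) ∨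
    (s e = w.1 ∧ t e = v.1 ∧ (((fun z => z + α e) '' w.2.val) ∩ v.2.val).Nonempty)
  symm := by
    constructor; rintro v w ⟨hne, e, h⟩
    exact ⟨hne.symm, e, h.symm⟩
  loopless := by constructor; rintro v ⟨hne, _⟩; exact hne rfl


/-!
Let `d : Fin m → ℤ/n` pick one of `δ, -δ` for every nonzero `δ` (for `m = n / 2` one can take
`d x = x + 1`). Every 2-subset of `ℤ/n` is `{g, g + d x}` for a unique `x`, and `g` is unique
except when `2 d x = 0`, in which case `g` and `g + d x` give the same pair. So letting `ω x` be
`⟨d x⟩` when `2 d x = 0` and trivial otherwise, `(x, g + ω x) ↦ {g, g + d x}` is a bijection from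
the vertices of the cover onto the 2-subsets. The pairs `{g, g + d x}` and `{h, h + d y}` meet iff
`g + i d x = h + j d y` for some `i, j ∈ {0, 1}`, so joining `x` to `y` by four edges with voltages
`i d x - j d y` makes adjacency in the cover exactly adjacency in `F₂(Kₙ)`.
-/

def tokenGraphCongr {W : Type*} [DecidableEq V] [DecidableEq W] {X : SimpleGraph V}
    {Y : SimpleGraph W} (φ : X ≃g Y) (k : ℕ) : tokenGraph X k ≃g tokenGraph Y k where
  toEquiv := (Equiv.finsetCongr φ.toEquiv).subtypeEquiv fun A => by simp
  map_rel_iff' {A B} := by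
    simp only [tokenGraph, Equiv.subtypeEquiv_apply, Equiv.finsetCongr_apply]
    rw [symmDiff_def, sup_eq_union, ← Finset.map_sdiff, ← Finset.map_sdiff, ← Finset.map_union,
      ← sup_eq_union, ← symmDiff_def]
    constructor
    · rintro ⟨a, b, hab, h⟩
      refine ⟨φ.symm a, φ.symm b, φ.symm.map_adj_iff.2 hab,
        Finset.map_injective φ.toEquiv.toEmbedding ?_⟩
      simp [h]
    · rintro ⟨a, b, hab, h⟩
      exact ⟨φ a, φ b, φ.map_adj_iff.2 hab, by simp [h]⟩

theorem Finset.card_symmDiff_add_two_mul_card_inter [DecidableEq V] (A B : Finset V) :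
    #(symmDiff A B) + 2 * #(A ∩ B) = #A + #B := by
  have h := card_union_add_card_inter A B
  have hle := card_le_card (inter_subset_union (s := A) (t := B))
  rw [symmDiff_eq_sup_sdiff_inf, sup_eq_union, inf_eq_inter,
    card_sdiff_of_subset inter_subset_union]
  omega

theorem tokenGraph_top_two_adj_iff [DecidableEq V] {A B : {A : Finset V // A.card = 2}} :
    (tokenGraph ⊤ 2).Adj A B ↔ A ≠ B ∧ (A.val ∩ B.val).Nonempty := by
  have hsymm : (tokenGraph ⊤ 2).Adj A B ↔ #(symmDiff A.val B.val) = 2 := by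
    simp only [tokenGraph, top_adj, card_eq_two]
  have hcard := card_symmDiff_add_two_mul_card_inter A.val B.val
  have hle : #(A.val ∩ B.val) ≤ 2 := (card_le_card inter_subset_left).trans A.2.le
  have heq : #(A.val ∩ B.val) = 2 ↔ A = B := by
    refine ⟨fun h => Subtype.ext ?_, fun h => by rw [h, inter_self, B.2]⟩
    rw [← eq_of_subset_of_card_le inter_subset_left (h.trans A.2.symm).ge,
      eq_of_subset_of_card_le inter_subset_right (h.trans B.2.symm).ge]
  rw [A.2, B.2] at hcard
  rw [hsymm, ← card_pos, Ne, ← heq]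
  omega

theorem AddSubgroup.coe_zmultiples_subset_pair {G : Type*} [AddGroup G] {a : G}
    (ha : 2 • a = 0) : (AddSubgroup.zmultiples a : Set G) ⊆ {0, a} := by
  rintro _ ⟨k, rfl⟩
  have ha' : (2 : ℤ) • a = 0 := by rwa [two_zsmul, ← two_nsmul]
  rcases Int.even_or_odd' k with ⟨r, rfl | rfl⟩
  · simp [mul_comm, mul_zsmul, ha']
  · simp [add_zsmul, mul_comm, mul_zsmul, ha']

section AddCommGroup

variable {G : Type*} [AddCommGroup G]

theorem image_add_inter_image_add_nonempty_iff (K H : Set G) (a b : G) :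
    ((fun z => z + a) '' K ∩ (fun z => z + b) '' H).Nonempty ↔
      ((fun z => z + (a - b)) '' K ∩ H).Nonempty := by
  constructor
  · rintro ⟨_, ⟨k, hk, rfl⟩, h, hh, hhk⟩
    have : k + (a - b) = h := by rw [eq_sub_of_add_eq hhk, add_sub_assoc]
    exact ⟨k + (a - b), ⟨k, hk, rfl⟩, this ▸ hh⟩
  · rintro ⟨_, ⟨k, hk, rfl⟩, hH⟩
    exact ⟨k + a, ⟨k, hk, rfl⟩, k + (a - b), hH, by dsimp only; abel⟩

theorem image_add_add_of_mem {S : AddSubgroup G} {s : G} (hs : s ∈ S) (g : G) :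
    (fun z => g + s + z) '' (S : Set G) = (fun z => g + z) '' (S : Set G) := by
  conv_rhs => rw [← vadd_coe_set hs, ← Set.image_vadd, Set.image_image]
  simp only [vadd_eq_add, add_assoc]

theorem coset_union_image_add_eq_pair {S : AddSubgroup G} {d : G} (hS : (S : Set G) ⊆ {0, d})
    (g : G) :
    (fun z => g + z) '' (S : Set G) ∪ (fun z => z + d) '' ((fun z => g + z) '' (S : Set G)) =
      {g, g + d} := by
  ext z
  simp only [Set.mem_union, Set.mem_image, Set.mem_insert_iff, Set.mem_singleton_iff]
  constructor
  · rintro (⟨s, hs, rfl⟩ | ⟨_, ⟨s, hs, rfl⟩, rfl⟩)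
    · rcases hS hs with rfl | rfl <;> simp
    · rcases hS hs with rfl | rfl
      · simp
      · rcases hS (S.add_mem hs hs) with h2d | h2d
        · simp [add_assoc, h2d]
        · simp_all
  · rintro (rfl | rfl)
    · exact Or.inl ⟨0, S.zero_mem, add_zero _⟩
    · exact Or.inr ⟨_, ⟨0, S.zero_mem, add_zero _⟩, rfl⟩

end AddCommGroup

structure IsSignTransversal {m n : ℕ} (d : Fin m → ZMod n) : Prop where
  ne_zero : ∀ x, d x ≠ 0
  exists_eq_or_eq_neg : ∀ δ ≠ 0, ∃ x, d x = δ ∨ d x = -δ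
  eq_of_eq_or_eq_neg : ∀ {x y}, d x = d y ∨ d x = -d y → x = y

section SignTransversalCover

variable {m n : ℕ} (d : Fin m → ZMod n)

abbrev BaseEdge (m : ℕ) := Fin m × Fin m × Bool × Bool

def endShift (x : Fin m) (b : Bool) : ZMod n := if b then d x else 0

def voltage (e : BaseEdge m) : ZMod n := endShift d e.1 e.2.2.1 - endShift d e.2.1 e.2.2.2

def vertexGroup (x : Fin m) : AddSubgroup (ZMod n) :=
  if 2 • d x = 0 then AddSubgroup.zmultiples (d x) else ⊥

abbrev CoverVertex := Σ x : Fin m, {K : Set (ZMod n) // ∃ g : ZMod n,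
  K = (fun z => g + z) '' (vertexGroup d x : Set (ZMod n))}

abbrev tokenCover : SimpleGraph (CoverVertex d) :=
  coveringGraph (BaseEdge m) Prod.fst (fun e => e.2.1) (voltage d) (vertexGroup d)

def tokenSet (v : CoverVertex d) : Set (ZMod n) := v.2.1 ∪ (fun z => z + d v.1) '' v.2.1

theorem coe_vertexGroup_subset (x : Fin m) : (vertexGroup d x : Set (ZMod n)) ⊆ {0, d x} := by
  unfold vertexGroup
  split_ifs with h
  · exact AddSubgroup.coe_zmultiples_subset_pair h
  · simp

theorem tokenSet_eq {v : CoverVertex d} {g : ZMod n}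
    (hg : v.2.1 = (fun z => g + z) '' (vertexGroup d v.1 : Set (ZMod n))) :
    tokenSet d v = {g, g + d v.1} := by
  rw [tokenSet, hg]
  exact coset_union_image_add_eq_pair (coe_vertexGroup_subset d v.1) g

theorem exists_baseEdge_iff (v w : CoverVertex d) :
    (∃ e : BaseEdge m, e.1 = v.1 ∧ e.2.1 = w.1 ∧
      ((fun z => z + voltage d e) '' v.2.1 ∩ w.2.1).Nonempty) ↔
      (tokenSet d v ∩ tokenSet d w).Nonempty := by
  simp only [Prod.exists, exists_and_left, exists_eq_left, voltage,
    ← image_add_inter_image_add_nonempty_iff, Bool.exists_bool, endShift, Bool.false_eq_true,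
    ↓reduceIte, add_zero, Set.image_id', tokenSet, Set.union_inter_distrib_right,
    Set.inter_union_distrib_left, Set.union_nonempty]
  tauto

theorem tokenCover_adj_iff {v w : CoverVertex d} :
    (tokenCover d).Adj v w ↔ v ≠ w ∧ (tokenSet d v ∩ tokenSet d w).Nonempty := by
  refine and_congr_right fun _ => ⟨?_, fun h => ?_⟩
  · rintro ⟨e, he | he⟩
    · exact (exists_baseEdge_iff d v w).1 ⟨e, he⟩
    · exact Set.inter_comm (tokenSet d v) _ ▸ (exists_baseEdge_iff d w v).1 ⟨e, he⟩
  · obtain ⟨e, he⟩ := (exists_baseEdge_iff d v w).2 h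
    exact ⟨e, Or.inl he⟩

theorem tokenSet_finite (v : CoverVertex d) : (tokenSet d v).Finite := by
  obtain ⟨g, hg⟩ := v.2.2
  rw [tokenSet_eq d hg]
  exact Set.toFinite _

noncomputable def tokenFinset (v : CoverVertex d) : Finset (ZMod n) :=
  (tokenSet_finite d v).toFinset

@[simp]
theorem coe_tokenFinset (v : CoverVertex d) : (tokenFinset d v : Set (ZMod n)) = tokenSet d v :=
  Set.Finite.coe_toFinset _

variable {d}

namespace IsSignTransversal

theorem tokenSet_injective (hd : IsSignTransversal d) : Function.Injective (tokenSet d) := by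
  rintro ⟨x, K, g, hg⟩ ⟨y, H, h, hh⟩ hKH
  rw [tokenSet_eq d (v := ⟨x, K, g, hg⟩) hg, tokenSet_eq d (v := ⟨y, H, h, hh⟩) hh] at hKH
  obtain ⟨rfl, hx⟩ | ⟨rfl, hy⟩ := Set.pair_eq_pair_iff.1 hKH
  · obtain rfl := hd.eq_of_eq_or_eq_neg (Or.inl (add_left_cancel hx))
    subst hg hh
    rfl
  · have hneg : d x = -d y := by linear_combination hy
    obtain rfl := hd.eq_of_eq_or_eq_neg (Or.inr hneg)
    have hmem : d x ∈ vertexGroup d x := by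
      have h2 : 2 • d x = 0 := by rw [two_nsmul]; linear_combination hneg
      simp [vertexGroup, h2, AddSubgroup.mem_zmultiples]
    subst hg hh
    simp only [image_add_add_of_mem hmem]

theorem exists_tokenSet_eq (hd : IsSignTransversal d) {a b : ZMod n} (hab : a ≠ b) :
    ∃ v, tokenSet d v = {a, b} := by
  obtain ⟨x, hx | hx⟩ := hd.exists_eq_or_eq_neg (b - a) (sub_ne_zero.2 hab.symm)
  · exact ⟨⟨x, _, a, rfl⟩, by rw [tokenSet_eq d rfl, hx, add_sub_cancel]⟩
  · exact ⟨⟨x, _, b, rfl⟩, by rw [tokenSet_eq d rfl, hx, neg_sub, add_sub_cancel, Set.pair_comm]⟩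

theorem card_tokenFinset (hd : IsSignTransversal d) (v : CoverVertex d) :
    #(tokenFinset d v) = 2 := by
  obtain ⟨g, hg⟩ := v.2.2
  rw [← Set.ncard_coe_finset, coe_tokenFinset, tokenSet_eq d hg]
  exact Set.ncard_pair (left_ne_add.2 (hd.ne_zero v.1))

noncomputable def tokenCoverIso (hd : IsSignTransversal d) :
    tokenCover d ≃g tokenGraph (⊤ : SimpleGraph (ZMod n)) 2 := by
  have hinj : Function.Injective (tokenFinset d) := fun v w h =>
    hd.tokenSet_injective (by rw [← coe_tokenFinset, h, coe_tokenFinset])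
  refine ⟨Equiv.ofBijective (fun v => ⟨tokenFinset d v, hd.card_tokenFinset v⟩) ⟨?_, ?_⟩, ?_⟩
  · exact fun v w h => hinj (congrArg Subtype.val h)
  · rintro ⟨A, hA⟩
    obtain ⟨a, b, hab, rfl⟩ := card_eq_two.1 hA
    obtain ⟨v, hv⟩ := hd.exists_tokenSet_eq hab
    exact ⟨v, Subtype.ext (coe_inj.1 (by simp [hv]))⟩
  · intro v w
    change (tokenGraph ⊤ 2).Adj ⟨tokenFinset d v, _⟩ ⟨tokenFinset d w, _⟩ ↔ _
    simp only [tokenGraph_top_two_adj_iff, tokenCover_adj_iff, ne_eq, Subtype.mk.injEq,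
      hinj.eq_iff, ← coe_nonempty, coe_inter, coe_tokenFinset]

end IsSignTransversal

end SignTransversalCover

theorem isSignTransversal_natCast_succ (n : ℕ) [NeZero n] :
    IsSignTransversal fun x : Fin (n / 2) => ((x.val + 1 : ℕ) : ZMod n) := by
  have hn := NeZero.ne n
  have hval (x : Fin (n / 2)) : ((x.val + 1 : ℕ) : ZMod n).val = x.val + 1 :=
    ZMod.val_cast_of_lt (by omega)
  have hsurj (δ : ZMod n) (hδ : δ ≠ 0) (hle : δ.val ≤ n / 2) :
      ∃ x : Fin (n / 2), ((x.val + 1 : ℕ) : ZMod n) = δ := by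
    have := ZMod.val_pos.2 hδ
    exact ⟨⟨δ.val - 1, by omega⟩, by simp [Nat.sub_add_cancel this]⟩
  refine ⟨fun x h => ?_, fun δ hδ => ?_, fun {x y} h => ?_⟩
  · have := hval x
    rw [h, ZMod.val_zero] at this
    omega
  · by_cases hle : δ.val ≤ n / 2
    · obtain ⟨x, hx⟩ := hsurj δ hδ hle
      exact ⟨x, Or.inl hx⟩
    · have hneg : (-δ).val = n - δ.val := by rw [ZMod.neg_val, if_neg hδ]
      obtain ⟨x, hx⟩ := hsurj (-δ) (neg_ne_zero.2 hδ) (by omega)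
      exact ⟨x, Or.inr hx⟩
  · rcases h with h | h
    · have := congrArg ZMod.val h
      rw [hval, hval] at this
      exact Fin.ext (by omega)
    · have hdvd : n ∣ x.val + 1 + (y.val + 1) := by
        rw [← ZMod.natCast_eq_zero_iff, Nat.cast_add, h, neg_add_cancel]
      have := Nat.le_of_dvd (by omega) hdvd
      exact Fin.ext (by omega)

theorem tokenGraph_complete_two_is_cover_general (n : ℕ) (hn : 2 ≤ n) :
    ∃ (E : Type) (_ : Fintype E) (s t : E → Fin (n / 2)) (α : E → ZMod n)
      (ω : Fin (n / 2) → AddSubgroup (ZMod n)),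
      Nonempty (coveringGraph E s t α ω ≃g tokenGraph (⊤ : SimpleGraph (Fin n)) 2) := by
  have : NeZero n := ⟨by omega⟩
  exact ⟨BaseEdge (n / 2), inferInstance, Prod.fst, fun e => e.2.1, voltage _, vertexGroup _,
    ⟨(isSignTransversal_natCast_succ n).tokenCoverIso.trans
      (tokenGraphCongr (Iso.completeGraph (ZMod.finEquiv n).symm.toEquiv) 2)⟩⟩

/-- For even `n`, the token graph `F_2(K_n)` is a covering graph over a combined base
graph on `n/2` vertices with voltages in `ZMod n`. -/
theorem tokenGraph_complete_two_is_cover (n : ℕ) (hn : 2 ≤ n) (hev : Even n) :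
    ∃ (E : Type) (_ : Fintype E) (s t : E → Fin (n / 2)) (α : E → ZMod n)
      (ω : Fin (n / 2) → AddSubgroup (ZMod n)),
      Nonempty (coveringGraph E s t α ω ≃g tokenGraph (⊤ : SimpleGraph (Fin n)) 2) :=
  tokenGraph_complete_two_is_cover_general n hn
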